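/- arXiv:1402.6267 — 4 statements merged into one kernel-verified Lean document; each statement's English description precedes it below -/
import Mathlib

section
/- Let u be a 1-periodic C² function on ℝ³ with ∫_{[0,1]³} u dV = 0 solving the reduced Calabi–Yau equation (u_xx + 1)(u_yy + u_tt + u_t + 1) − u_xy² − u_xt² = e^F for a continuous 1-periodic F : ℝ³ → ℝ. Then at every point of ℝ³ one has u_xx > −1 and u_yy + u_tt + u_t > −1. -/
/-!
The equation gives `(u_xx + 1) (u_yy + u_tt + u_t + 1) = e^F + u_xy² + u_xt² > 0`, so the
continuous function `u_xx + 1` never vanishes and, `ℝ³` being connected, has constant sign.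
Rolle's theorem applied to the periodic function `s ↦ u_x(s, 0, 0)` on `[0, 1]` yields a point
where `u_xx = 0`, so that sign is positive; the positivity of the product then forces the second
factor to be positive as well.
-/

open MeasureTheory

noncomputable section

/-- Points of `ℝ³`, written as `ℝ × ℝ × ℝ`. -/
abbrev R3 := ℝ × ℝ × ℝ

/-- The coordinate direction `x`. -/
def vx : R3 := (1, 0, 0)
/-- The coordinate direction `y`. -/
def vy : R3 := (0, 1, 0)
/-- The coordinate direction `t`. -/
def vt : R3 := (0, 0, 1)

/-- Partial (directional) derivative in the direction `e`. -/
def pd (e : R3) (u : R3 → ℝ) : R3 → ℝ := fun p => fderiv ℝ u p e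

/-- `1`-periodicity in each of the three variables. -/
def Periodic3 (u : R3 → ℝ) : Prop :=
  ∀ p : R3, u (p + vx) = u p ∧ u (p + vy) = u p ∧ u (p + vt) = u p

/-- The unit cube `[0,1]³`. -/
def cube : Set R3 := Set.Icc (0, 0, 0) (1, 1, 1)

/-- Zero mean over the unit cube. -/
def ZeroMean (u : R3 → ℝ) : Prop := ∫ p in cube, u p = 0

/-- The reduced Calabi–Yau equation
`(u_xx + 1)(u_yy + u_tt + u_t + 1) − u_xy² − u_xt² = e^F` on `ℝ³`. -/
def CYeq (F u : R3 → ℝ) : Prop :=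
  ∀ p : R3,
    (pd vx (pd vx u) p + 1)
        * (pd vy (pd vy u) p + pd vt (pd vt u) p + pd vt u p + 1)
      - (pd vy (pd vx u) p) ^ 2 - (pd vt (pd vx u) p) ^ 2 = Real.exp (F p)

/-- The Euclidean norm on `ℝ³ = ℝ × ℝ × ℝ`. -/
def enorm3 (h : R3) : ℝ := Real.sqrt (h.1 ^ 2 + h.2.1 ^ 2 + h.2.2 ^ 2)

theorem pos_of_ne_zero_of_pos {X α : Type*} [TopologicalSpace X] [PreconnectedSpace X]
    [LinearOrder α] [TopologicalSpace α] [OrderClosedTopology α] [Zero α]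
    {f : X → α} (hf : Continuous f) (hne : ∀ x, f x ≠ 0) {q : X} (hq : 0 < f q) (x : X) :
    0 < f x := by
  refine (hne x).lt_or_gt.resolve_left fun hlt => ?_
  obtain ⟨r, hr⟩ := intermediate_value_univ x q hf ⟨hlt.le, hq.le⟩
  exact hne r hr

theorem contDiff_pd {u : R3 → ℝ} {m n : WithTop ℕ∞} (hu : ContDiff ℝ n u) (hmn : m + 1 ≤ n)
    (e : R3) : ContDiff ℝ m (pd e u) :=
  (hu.fderiv_right hmn).clm_apply contDiff_const

theorem pd_add_of_periodic {w : R3 → ℝ} {v : R3} (hper : ∀ p, w (p + v) = w p) (e p : R3) :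
    pd e w (p + v) = pd e w p := by
  simp only [pd, ← fderiv_comp_add_right, hper]

theorem hasDerivAt_pd_smul {w : R3 → ℝ} (e : R3) {s : ℝ} (hw : DifferentiableAt ℝ w (s • e)) :
    HasDerivAt (fun s : ℝ => w (s • e)) (pd e w (s • e)) s := by
  have := hw.hasFDerivAt.comp_hasDerivAt s ((hasDerivAt_id s).smul_const e)
  rw [one_smul] at this
  exact this

theorem exists_pd_eq_zero_of_periodic {w : R3 → ℝ} (hw : Differentiable ℝ w) {e : R3}
    (hper : ∀ p, w (p + e) = w p) : ∃ q, pd e w q = 0 := by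
  have hends : w ((0 : ℝ) • e) = w ((1 : ℝ) • e) := by
    simpa using (hper 0).symm
  obtain ⟨s, -, hs⟩ := exists_hasDerivAt_eq_zero zero_lt_one
    (hw.continuous.comp (continuous_id.smul continuous_const)).continuousOn hends
    fun s _ => hasDerivAt_pd_smul e (hw _)
  exact ⟨_, hs⟩

theorem CYeq.mul_pos {F u : R3 → ℝ} (hsol : CYeq F u) (p : R3) :
    0 < (pd vx (pd vx u) p + 1) * (pd vy (pd vy u) p + pd vt (pd vt u) p + pd vt u p + 1) := by
  nlinarith [hsol p, Real.exp_pos (F p), sq_nonneg (pd vy (pd vx u) p),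
    sq_nonneg (pd vt (pd vx u) p)]

theorem stmt0_general (F u : R3 → ℝ)
    (hu : ContDiff ℝ 2 u) (huper : Periodic3 u)
    (hsol : CYeq F u) :
    ∀ p : R3, -1 < pd vx (pd vx u) p ∧ -1 < pd vy (pd vy u) p + pd vt (pd vt u) p + pd vt u p := by
  have hux : ContDiff ℝ 1 (pd vx u) := contDiff_pd hu (by norm_num) vx
  have huxx : Continuous (pd vx (pd vx u)) := (contDiff_pd (m := 0) hux le_rfl vx).continuous
  obtain ⟨q, hq⟩ := exists_pd_eq_zero_of_periodic (hux.differentiable one_ne_zero)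
    (pd_add_of_periodic (fun p => (huper p).1) vx)
  have hA : ∀ p, 0 < pd vx (pd vx u) p + 1 :=
    pos_of_ne_zero_of_pos (huxx.add continuous_const)
      (fun p => left_ne_zero_of_mul (hsol.mul_pos p).ne') (q := q) (by simp [hq])
  intro p
  have hB := pos_of_mul_pos_right (hsol.mul_pos p) (hA p).le
  constructor <;> linarith [hA p]

/-- For a `C²` `1`-periodic zero-mean solution `u` of the reduced
Calabi–Yau equation with continuous `1`-periodic datum `F`, one has `u_xx > -1`
and `u_yy + u_tt + u_t > -1` everywhere. -/
theorem stmt0 (F u : R3 → ℝ) (hF : Continuous F) (hFper : Periodic3 F)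
    (hu : ContDiff ℝ 2 u) (huper : Periodic3 u) (humean : ZeroMean u)
    (hsol : CYeq F u) :
    ∀ p : R3, -1 < pd vx (pd vx u) p ∧ -1 < pd vy (pd vy u) p + pd vt (pd vt u) p + pd vt u p :=
  stmt0_general F u hu huper hsol

end
end

section
/- Let u ∈ C̃²(T³) solve the reduced Calabi–Yau equation (u_xx + 1)(u_yy + u_tt + u_t + 1) − u_xy² − u_xt² = e^F with F continuous and 1-periodic. Then at every point of ℝ³ and for all (ξ, η, τ) ∈ ℝ³: (u_xx + 1)(η² + τ²) + (u_yy + u_tt + u_t + 1)ξ² − 2 u_xy ξη − 2 u_xt ξτ ≥ Λ(u) (ξ² + η² + τ²), where Λ(u) = ½( (Δu + u_t + 2) − √( (Δu + u_t + 2)² − 4 e^F ) ). -/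
open MeasureTheory

noncomputable section

lemma cy_key (a c b1 b2 E : ℝ) (hE : a * c - b1 ^ 2 - b2 ^ 2 = E)
    (ξ η τ : ℝ) :
    a * (η ^ 2 + τ ^ 2) + c * ξ ^ 2 - 2 * b1 * ξ * η - 2 * b2 * ξ * τ
      ≥ 1 / 2 * ((a + c) - Real.sqrt ((a + c) ^ 2 - 4 * E)) * (ξ ^ 2 + η ^ 2 + τ ^ 2) := by
  have hD : (a + c) ^ 2 - 4 * E = (a - c) ^ 2 + (2 * b1) ^ 2 + (2 * b2) ^ 2 := by
    rw [← hE]; ring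
  have hDnn : 0 ≤ (a + c) ^ 2 - 4 * E := by rw [hD]; positivity
  set s := Real.sqrt ((a + c) ^ 2 - 4 * E) with hsdef
  have hs2 : s ^ 2 = (a - c) ^ 2 + (2 * b1) ^ 2 + (2 * b2) ^ 2 :=
    (Real.sq_sqrt hDnn).trans hD
  have habs : |a - c| ≤ s := by
    rw [← Real.sqrt_sq_eq_abs]
    apply Real.sqrt_le_sqrt
    rw [hD]; nlinarith [sq_nonneg (2 * b1), sq_nonneg (2 * b2)]
  have h1 : 0 ≤ (a - c + s) / 2 := by
    have := (abs_le.mp (le_refl |a - c|)).2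
    have := le_abs_self (a - c)
    have := neg_abs_le (a - c)
    linarith
  have h2 : 0 ≤ (c - a + s) / 2 := by
    have := le_abs_self (a - c)
    linarith
  have hAC : ((a - c + s) / 2) * ((c - a + s) / 2) = b1 ^ 2 + b2 ^ 2 := by
    linear_combination hs2 / 4
  rw [ge_iff_le, ← sub_nonneg]
  rcases h1.eq_or_lt with h0 | hpos
  · have hb : b1 ^ 2 + b2 ^ 2 = 0 := by rw [← hAC, ← h0]; ring
    have hb1 : b1 = 0 := by nlinarith [sq_nonneg b1, sq_nonneg b2]
    have hb2 : b2 = 0 := by nlinarith [sq_nonneg b1, sq_nonneg b2]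
    subst hb1; subst hb2
    nlinarith [mul_nonneg h2 (sq_nonneg ξ), mul_nonneg h1 (sq_nonneg η),
      mul_nonneg h1 (sq_nonneg τ)]
  · have hkey : ((a - c + s) / 2) *
        (a * (η ^ 2 + τ ^ 2) + c * ξ ^ 2 - 2 * b1 * ξ * η - 2 * b2 * ξ * τ
          - 1 / 2 * ((a + c) - s) * (ξ ^ 2 + η ^ 2 + τ ^ 2))
        = (b1 * ξ - ((a - c + s) / 2) * η) ^ 2 + (b2 * ξ - ((a - c + s) / 2) * τ) ^ 2 := by
      linear_combination (ξ ^ 2) * hAC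
    have hprod : 0 ≤ ((a - c + s) / 2) *
        (a * (η ^ 2 + τ ^ 2) + c * ξ ^ 2 - 2 * b1 * ξ * η - 2 * b2 * ξ * τ
          - 1 / 2 * ((a + c) - s) * (ξ ^ 2 + η ^ 2 + τ ^ 2)) := by
      rw [hkey]; positivity
    nlinarith [hprod, hpos]


/-- Pointwise ellipticity of the reduced Calabi–Yau equation:
the principal symbol of the linearization dominates
`Λ(u) = ½((Δu + u_t + 2) − √((Δu + u_t + 2)² − 4 e^F))` times the identity. -/
theorem stmt2 (F u : R3 → ℝ) (hF : Continuous F) (hFper : Periodic3 F)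
    (hu : ContDiff ℝ 2 u) (huper : Periodic3 u) (humean : ZeroMean u)
    (hsol : CYeq F u) :
    ∀ p : R3, ∀ ξ η τ : ℝ,
      (pd vx (pd vx u) p + 1) * (η ^ 2 + τ ^ 2)
          + (pd vy (pd vy u) p + pd vt (pd vt u) p + pd vt u p + 1) * ξ ^ 2
          - 2 * pd vy (pd vx u) p * ξ * η - 2 * pd vt (pd vx u) p * ξ * τ
        ≥ (1 / 2) * ((pd vx (pd vx u) p + pd vy (pd vy u) p + pd vt (pd vt u) p + pd vt u p + 2)
              - Real.sqrt ((pd vx (pd vx u) p + pd vy (pd vy u) p + pd vt (pd vt u) p + pd vt u p + 2) ^ 2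
                  - 4 * Real.exp (F p)))
            * (ξ ^ 2 + η ^ 2 + τ ^ 2) := by
  intro p ξ η τ
  have harg : pd vx (pd vx u) p + pd vy (pd vy u) p + pd vt (pd vt u) p + pd vt u p + 2
      = (pd vx (pd vx u) p + 1)
        + (pd vy (pd vy u) p + pd vt (pd vt u) p + pd vt u p + 1) := by ring
  rw [harg]
  exact cy_key _ _ _ _ _ (hsol p) ξ η τ

end
end

section
/- Let v : ℝ → ℝ be a C² function which is L-periodic for some L > 0 and satisfies v''(s) ≥ −1 for all s ∈ ℝ. Then |v'(s)| ≤ L for all s ∈ ℝ. -/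
/-! Since `v'' ≥ -1`, the function `v' + id` is monotone. By Rolle, `v'` vanishes at some `ξ`
in every period `(s, s + L)`, hence also at `ξ - L`; comparing `v' + id` at `ξ - L ≤ s ≤ ξ`
gives `ξ - L - s ≤ v' s ≤ ξ - s`, so `|v' s| ≤ L`. -/

open MeasureTheory

noncomputable section

theorem Function.Periodic.deriv {f : ℝ → ℝ} {c : ℝ} (hf : Function.Periodic f c) :
    Function.Periodic (_root_.deriv f) c := fun x => by
  rw [← deriv_comp_add_const, show (fun y => f (y + c)) = f from funext hf]

theorem Function.Periodic.exists_deriv_eq_zero {f : ℝ → ℝ} {c : ℝ} (hf : Function.Periodic f c)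
    (hc : 0 < c) (hfc : Continuous f) (a : ℝ) : ∃ ξ ∈ Set.Ioo a (a + c), _root_.deriv f ξ = 0 :=
  _root_.exists_deriv_eq_zero (by linarith) hfc.continuousOn (hf a).symm

theorem monotone_add_id_of_neg_one_le_deriv {f : ℝ → ℝ} (hf : Differentiable ℝ f)
    (hf' : ∀ x, -1 ≤ deriv f x) : Monotone fun x => f x + x :=
  monotone_of_deriv_nonneg (hf.add differentiable_id) fun x => by
    rw [deriv_fun_add (hf x) differentiableAt_fun_id, deriv_id'']
    linarith [hf' x]

theorem abs_le_of_periodic_of_monotone_add_id {w : ℝ → ℝ} {c : ℝ} (hw : Function.Periodic w c)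
    (hmono : Monotone fun x => w x + x) {a ξ : ℝ} (hξ : ξ ∈ Set.Icc a (a + c)) (hwξ : w ξ = 0) :
    |w a| ≤ c := by
  have hwξ' : w (ξ - c) = 0 := by rw [hw.sub_eq, hwξ]
  have upper := hmono hξ.1
  have lower := hmono (show ξ - c ≤ a by linarith [hξ.2])
  simp only [hwξ, hwξ'] at upper lower
  exact abs_le.mpr ⟨by linarith [hξ.1], by linarith [hξ.2]⟩

/-- A `C²` `L`-periodic function `v : ℝ → ℝ` with `v'' ≥ −1`
satisfies `|v'| ≤ L`. -/
theorem stmt4 (v : ℝ → ℝ) (L : ℝ) (hL : 0 < L) (hv : ContDiff ℝ 2 v)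
    (hper : ∀ s : ℝ, v (s + L) = v s)
    (hconv : ∀ s : ℝ, -1 ≤ deriv (deriv v) s) :
    ∀ s : ℝ, |deriv v s| ≤ L := by
  intro s
  have hper' : Function.Periodic v L := hper
  obtain ⟨ξ, hξ, hvξ⟩ := hper'.exists_deriv_eq_zero hL hv.continuous s
  exact abs_le_of_periodic_of_monotone_add_id hper'.deriv
    (monotone_add_id_of_neg_one_le_deriv hv.differentiable_deriv_two hconv)
    (Set.Ioo_subset_Icc_self hξ) hvξ

end
end

section
/- Let u ∈ C̃²(T³) solve the reduced Calabi–Yau equation (u_xx + 1)(u_yy + u_tt + u_t + 1) − u_xy² − u_xt² = e^F with F continuous and 1-periodic. Then |u_x(x,y,t)| ≤ 1 for all (x,y,t) ∈ ℝ³. -/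
open MeasureTheory

noncomputable section

/-!
Along every line in the `x`-direction, `φ(s) = u(p + s vx)` is `1`-periodic, and the equation
forces `φ'' + 1 = u_xx + 1 ≠ 0`: otherwise its left-hand side would be `-u_xy² - u_xt² ≤ 0`.
By Darboux, `ψ = φ' + id` is then strictly monotone or strictly antitone. By Rolle, `φ'`
vanishes at some `c₁ ∈ (s - 1, s)` and `c₂ ∈ (s, s + 1)`, where `ψ(cᵢ) = cᵢ`; this rules out
the antitone case, and monotonicity gives `c₁ < φ'(s) + s < c₂`, i.e. `|φ'(s)| < 1`.
-/

open Set

theorem Function.Periodic.exists_hasDerivAt_eq_zero {φ φ' : ℝ → ℝ} {T : ℝ} (hT : 0 < T)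
    (hper : Function.Periodic φ T) (hφ : ∀ x, HasDerivAt φ (φ' x) x) (a : ℝ) :
    ∃ c ∈ Ioo a (a + T), φ' c = 0 :=
  _root_.exists_hasDerivAt_eq_zero (by linarith)
    (fun x _ => (hφ x).continuousAt.continuousWithinAt) (hper a).symm fun x _ => hφ x

theorem Function.Periodic.abs_deriv_lt_of_deriv_deriv_ne_neg_one {φ φ' φ'' : ℝ → ℝ} {T : ℝ}
    (hT : 0 < T) (hper : Function.Periodic φ T) (hφ : ∀ x, HasDerivAt φ (φ' x) x)
    (hφ' : ∀ x, HasDerivAt φ' (φ'' x) x) (hne : ∀ x, φ'' x ≠ -1) (x : ℝ) :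
    |φ' x| < T := by
  set ψ : ℝ → ℝ := fun s => φ' s + s
  have hψ : ∀ s, HasDerivAt ψ (φ'' s + 1) s := fun s => (hφ' s).add (hasDerivAt_id s)
  obtain ⟨c₁, ⟨hc₁l, hc₁r⟩, hc₁⟩ := hper.exists_hasDerivAt_eq_zero hT hφ (x - T)
  obtain ⟨c₂, ⟨hc₂l, hc₂r⟩, hc₂⟩ := hper.exists_hasDerivAt_eq_zero hT hφ x
  have hψc₁ : ψ c₁ = c₁ := by simp [ψ, hc₁]
  have hψc₂ : ψ c₂ = c₂ := by simp [ψ, hc₂]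
  have hmono : StrictMono ψ := by
    rcases hasDerivWithinAt_forall_lt_or_forall_gt_of_forall_ne convex_univ
        (fun s _ => (hψ s).hasDerivWithinAt) (m := 0)
        (fun s _ h => hne s (by linarith)) with hneg | hpos
    · have hanti : StrictAnti ψ :=
        strictAnti_of_hasDerivAt_neg hψ fun s => hneg s (mem_univ s)
      have := hanti (show c₁ < c₂ by linarith)
      linarith
    · exact strictMono_of_hasDerivAt_pos hψ fun s => hpos s (mem_univ s)
  have h₁ : c₁ < ψ x := hψc₁ ▸ hmono (by linarith)
  have h₂ : ψ x < c₂ := hψc₂ ▸ hmono hc₂l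
  simp only [ψ] at h₁ h₂
  rw [abs_lt]
  constructor <;> linarith

theorem hasDerivAt_comp_add_smul {E : Type*} [NormedAddCommGroup E] [NormedSpace ℝ E]
    {f : E → ℝ} (hf : Differentiable ℝ f) (p e : E) (s : ℝ) :
    HasDerivAt (fun s : ℝ => f (p + s • e)) (fderiv ℝ f (p + s • e) e) s := by
  have hline : HasDerivAt (fun s : ℝ => p + s • e) e s := by
    simpa using ((hasDerivAt_id s).smul_const e).const_add p
  exact (hf _).hasFDerivAt.comp_hasDerivAt s hline

theorem ContDiff.differentiable_pd {u : R3 → ℝ} (hu : ContDiff ℝ 2 u) (e : R3) :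
    Differentiable ℝ (pd e u) :=
  ((hu.fderiv_right (m := 1) (by norm_num)).clm_apply contDiff_const).differentiable
    (by norm_num)

theorem Periodic3.periodic_vx {u : R3 → ℝ} (hu : Periodic3 u) (p : R3) :
    Function.Periodic (fun s : ℝ => u (p + s • vx)) 1 := fun s => by
  simpa [add_smul, add_assoc] using (hu (p + s • vx)).1

theorem CYeq.pd_vx_pd_vx_ne_neg_one {F u : R3 → ℝ} (hsol : CYeq F u) (p : R3) :
    pd vx (pd vx u) p ≠ -1 := by
  intro h
  have := hsol p
  rw [h, neg_add_cancel, zero_mul] at this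
  nlinarith [Real.exp_pos (F p), sq_nonneg (pd vy (pd vx u) p), sq_nonneg (pd vt (pd vx u) p)]

theorem stmt5_general (F u : R3 → ℝ)
    (hu : ContDiff ℝ 2 u) (huper : Periodic3 u)
    (hsol : CYeq F u) :
    ∀ p : R3, |pd vx u p| ≤ 1 := by
  intro p
  have hud : Differentiable ℝ u := hu.differentiable (by norm_num)
  have hbound := (huper.periodic_vx p).abs_deriv_lt_of_deriv_deriv_ne_neg_one one_pos
    (hasDerivAt_comp_add_smul hud p vx) (hasDerivAt_comp_add_smul (hu.differentiable_pd vx) p vx)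
    (fun s => hsol.pd_vx_pd_vx_ne_neg_one _) 0
  simpa [pd] using hbound.le

/-- For a `C²` `1`-periodic zero-mean solution `u` of the reduced
Calabi–Yau equation, `|u_x| ≤ 1` everywhere. -/
theorem stmt5 (F u : R3 → ℝ) (hF : Continuous F) (hFper : Periodic3 F)
    (hu : ContDiff ℝ 2 u) (huper : Periodic3 u) (humean : ZeroMean u)
    (hsol : CYeq F u) :
    ∀ p : R3, |pd vx u p| ≤ 1 :=
  stmt5_general F u hu huper hsol

end
end
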